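/- Let k ≥ 1 and let a_1 < a_2 < … < a_k be positive integers, A = {a_1,…,a_k}. For each 1 ≤ i ≤ k, in ℤ[[x,y,r,ℓ,d]] one has ( 1 − x^{2a_i}·y^2·(ℓ^2 − d·r) ) · P_A(a_i | x;y;r,ℓ,d) = x^{a_i}·y + x^{2a_i}·y^2·ℓ + x^{2a_i}·y^2·d·r·( P_A(x;y;r,ℓ,d) − 1 ). -/

import Mathlib

open scoped Classical

/-- Number of rises of a list (adjacent pairs with strict increase). -/
def risesL (l : List ℕ) : ℕ := (l.zip l.tail).countP (fun p => decide (p.1 < p.2))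

/-- Number of levels of a list (adjacent equal pairs). -/
def levelsL (l : List ℕ) : ℕ := (l.zip l.tail).countP (fun p => decide (p.1 = p.2))

/-- Number of drops of a list (adjacent pairs with strict decrease). -/
def dropsL (l : List ℕ) : ℕ := (l.zip l.tail).countP (fun p => decide (p.2 < p.1))

/-- The generating function `P_A(x;y;r,ℓ,d)` in `ℤ[[x,y,r,ℓ,d]]`, with
`x = X 0`, `y = X 1`, `r = X 2`, `ℓ = X 3`, `d = X 4`, counting palindromic
compositions of `n` with parts in `A = {a 1, …, a k}` by number of parts,
rises, levels and drops. -/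
noncomputable def PA {k : ℕ} (a : Fin k → ℕ) : MvPowerSeries (Fin 5) ℤ :=
  fun m => ((Finset.univ.filter (fun c : Composition (m 0) =>
      (∀ p ∈ c.blocks, ∃ i, a i = p) ∧ c.blocks.reverse = c.blocks ∧ c.length = m 1 ∧
      risesL c.blocks = m 2 ∧ levelsL c.blocks = m 3 ∧ dropsL c.blocks = m 4)).card : ℤ)

/-- The generating function `P_A(s | x;y;r,ℓ,d)`: as `PA`, but restricted to
palindromic compositions whose first part equals `s`. -/
noncomputable def PAs {k : ℕ} (a : Fin k → ℕ) (s : ℕ) : MvPowerSeries (Fin 5) ℤ :=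
  fun m => ((Finset.univ.filter (fun c : Composition (m 0) =>
      (∀ p ∈ c.blocks, ∃ i, a i = p) ∧ c.blocks.reverse = c.blocks ∧
      c.blocks.head? = some s ∧ c.length = m 1 ∧
      risesL c.blocks = m 2 ∧ levelsL c.blocks = m 3 ∧ dropsL c.blocks = m 4)).card : ℤ)

namespace Stmt3Aux


lemma match_some {α : Type} (y : ℕ) (f : ℕ → α) (d : α) :
    (match (some y : Option ℕ) with | some z => f z | none => d) = f y := rfl

def cntP (p : ℕ × ℕ → Bool) (l : List ℕ) : ℕ := (l.zip l.tail).countP p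

lemma cntP_nil (p) : cntP p [] = 0 := rfl
lemma cntP_single (p) (x : ℕ) : cntP p [x] = 0 := rfl

lemma cntP_cons (p) (x : ℕ) (l : List ℕ) :
    cntP p (x :: l) = (l.head?.elim 0 (fun y => if p (x,y) then 1 else 0))
      + cntP p l := by
  cases l with
  | nil => rfl
  | cons y l' =>
    show (((x,y) :: (y::l').zip l').countP p) = _
    rw [List.countP_cons]
    have : (y::l').zip l' = (y::l').zip (y::l').tail := rfl
    rw [this]
    simp [cntP]
    omega

lemma cntP_concat (p) (l : List ℕ) (x : ℕ) :
    cntP p (l ++ [x]) = cntP p l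
      + (l.getLast?.elim 0 (fun y => if p (y,x) then 1 else 0)) := by
  induction l with
  | nil => rfl
  | cons y l' ih =>
    rw [List.cons_append, cntP_cons, cntP_cons, ih]
    cases l' with
    | nil => simp [cntP_nil]
    | cons z l'' => simp [List.getLast?_cons_cons]; omega

lemma cntP_sandwich (p) (x b : ℕ) (t : List ℕ) (h1 : t.head? = some b)
    (h2 : t.getLast? = some b) :
    cntP p (x :: (t ++ [x])) = cntP p t
      + ((if p (x,b) then 1 else 0) + (if p (b,x) then 1 else 0)) := by
  have ht : t ≠ [] := by rintro rfl; simp at h1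
  rw [cntP_cons, cntP_concat, h2]
  have : (t ++ [x]).head? = some b := by
    cases t with | nil => simp at h1 | cons u t' => simpa using h1
  rw [this]
  simp only [Option.elim]
  omega

lemma risesL_sandwich (x b : ℕ) (t : List ℕ) (h1 : t.head? = some b) (h2 : t.getLast? = some b) :
    risesL (x :: (t ++ [x])) = risesL t + ((if x < b then 1 else 0) + (if b < x then 1 else 0)) := by
  have := cntP_sandwich (fun p => decide (p.1 < p.2)) x b t h1 h2
  simpa [risesL, cntP] using this

lemma levelsL_sandwich (x b : ℕ) (t : List ℕ) (h1 : t.head? = some b) (h2 : t.getLast? = some b) :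
    levelsL (x :: (t ++ [x])) = levelsL t + (if x = b then 2 else 0) := by
  have := cntP_sandwich (fun p => decide (p.1 = p.2)) x b t h1 h2
  simp only [levelsL, cntP] at this ⊢
  rw [this]
  by_cases h : x = b <;> simp [h, eq_comm]

lemma dropsL_sandwich (x b : ℕ) (t : List ℕ) (h1 : t.head? = some b) (h2 : t.getLast? = some b) :
    dropsL (x :: (t ++ [x])) = dropsL t + ((if b < x then 1 else 0) + (if x < b then 1 else 0)) := by
  have := cntP_sandwich (fun p => decide (p.2 < p.1)) x b t h1 h2
  simpa [dropsL, cntP] using this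

lemma risesL_single (x : ℕ) : risesL [x] = 0 := rfl
lemma levelsL_single (x : ℕ) : levelsL [x] = 0 := rfl
lemma dropsL_single (x : ℕ) : dropsL [x] = 0 := rfl

lemma risesL_pair (x : ℕ) : risesL [x, x] = 0 := by simp [risesL]
lemma levelsL_pair (x : ℕ) : levelsL [x, x] = 1 := by simp [levelsL]
lemma dropsL_pair (x : ℕ) : dropsL [x, x] = 0 := by simp [dropsL]



lemma card_filter_congr {α : Type*} {p q : α → Prop} {ip : DecidablePred p}
    {iq : DecidablePred q} (s : Finset α) (h : ∀ x ∈ s, p x ↔ q x) :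
    (@Finset.filter _ p ip s).card = (@Finset.filter _ q iq s).card := by
  refine congrArg Finset.card ?_
  ext x
  simp only [Finset.mem_filter]
  constructor
  · intro hh; exact ⟨hh.1, (h x hh.1).mp hh.2⟩
  · intro hh; exact ⟨hh.1, (h x hh.1).mpr hh.2⟩

noncomputable def cc (n : ℕ) (P : List ℕ → Prop) : ℕ :=
  (Finset.univ.filter (fun c : Composition n => P c.blocks)).card

def Ps {k : ℕ} (a : Fin k → ℕ) (s : ℕ) (m : Fin 5 →₀ ℕ) (l : List ℕ) : Prop :=
  (∀ p ∈ l, ∃ i, a i = p) ∧ l.reverse = l ∧ l.head? = some s ∧ l.length = m 1 ∧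
    risesL l = m 2 ∧ levelsL l = m 3 ∧ dropsL l = m 4

def Pt {k : ℕ} (a : Fin k → ℕ) (m : Fin 5 →₀ ℕ) (l : List ℕ) : Prop :=
  (∀ p ∈ l, ∃ i, a i = p) ∧ l.reverse = l ∧ l.length = m 1 ∧
    risesL l = m 2 ∧ levelsL l = m 3 ∧ dropsL l = m 4

def Pt' {k : ℕ} (a : Fin k → ℕ) (s : ℕ) (m : Fin 5 →₀ ℕ) (l : List ℕ) : Prop :=
  Pt a m l ∧ l.head? ≠ none ∧ l.head? ≠ some s

noncomputable def cS {k : ℕ} (a : Fin k → ℕ) (s : ℕ) (m : Fin 5 →₀ ℕ) : ℕ := cc (m 0) (Ps a s m)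
noncomputable def cT {k : ℕ} (a : Fin k → ℕ) (m : Fin 5 →₀ ℕ) : ℕ := cc (m 0) (Pt a m)
noncomputable def cT' {k : ℕ} (a : Fin k → ℕ) (s : ℕ) (m : Fin 5 →₀ ℕ) : ℕ := cc (m 0) (Pt' a s m)

lemma coeff_PAs {k : ℕ} (a : Fin k → ℕ) (s : ℕ) (m : Fin 5 →₀ ℕ) :
    MvPowerSeries.coeff (R := ℤ) m (PAs a s) = (cS a s m : ℤ) := by
  unfold PAs cS cc Ps
  norm_num [MvPowerSeries.coeff_apply]
  exact congrArg (fun n : ℕ => (n : ℤ)) (card_filter_congr _ (fun x _ => Iff.rfl))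

lemma coeff_PA {k : ℕ} (a : Fin k → ℕ) (m : Fin 5 →₀ ℕ) :
    MvPowerSeries.coeff (R := ℤ) m (PA a) = (cT a m : ℤ) := by
  unfold PA cT cc Pt
  norm_num [MvPowerSeries.coeff_apply]
  exact congrArg (fun n : ℕ => (n : ℤ)) (card_filter_congr _ (fun x _ => Iff.rfl))

lemma cc_congr {n : ℕ} {P Q : List ℕ → Prop}
    (h : ∀ l, l.sum = n → (∀ x ∈ l, 0 < x) → (P l ↔ Q l)) : cc n P = cc n Q := by
  unfold cc
  congr 1
  apply Finset.filter_congr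
  intro c _
  exact iff_iff_eq.mp (h c.blocks c.blocks_sum (fun x hx => c.blocks_pos hx)) ▸ Iff.rfl

lemma cc_split {n : ℕ} (P C : List ℕ → Prop) :
    cc n P = cc n (fun l => P l ∧ C l) + cc n (fun l => P l ∧ ¬ C l) := by
  unfold cc
  rw [← Finset.card_filter_add_card_filter_not (p := fun c : Composition n => C c.blocks),
    Finset.filter_filter, Finset.filter_filter]
  congr 1 <;> exact card_filter_congr _ (fun x _ => Iff.rfl)

lemma cc_zero {n : ℕ} {P : List ℕ → Prop} (h : ∀ l, l.sum = n → (∀ x ∈ l, 0 < x) → ¬ P l) :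
    cc n P = 0 := by
  unfold cc
  rw [Finset.card_eq_zero, Finset.eq_empty_iff_forall_notMem]
  intro c hc
  rw [Finset.mem_filter] at hc
  exact h c.blocks c.blocks_sum (fun x hx => c.blocks_pos hx) hc.2

def mk (n : ℕ) (l : List ℕ) (h1 : l.sum = n) (h2 : ∀ x ∈ l, 0 < x) : Composition n :=
  ⟨l, fun hi => h2 _ hi, h1⟩

lemma cc_one {n : ℕ} {P : List ℕ → Prop} (l₀ : List ℕ) (h1 : l₀.sum = n)
    (h2 : ∀ x ∈ l₀, 0 < x) (h3 : P l₀)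
    (h : ∀ l, l.sum = n → (∀ x ∈ l, 0 < x) → P l → l = l₀) : cc n P = 1 := by
  unfold cc
  rw [Finset.card_eq_one]
  refine ⟨mk n l₀ h1 h2, ?_⟩
  ext c
  simp only [Finset.mem_filter, Finset.mem_univ, true_and, Finset.mem_singleton]
  constructor
  · intro hc
    exact Composition.ext (h c.blocks c.blocks_sum (fun x hx => c.blocks_pos hx) hc)
  · rintro rfl; exact h3

lemma cc_bij {n n' : ℕ} {P Q : List ℕ → Prop} (f g : List ℕ → List ℕ)
    (hfg : ∀ l, l.sum = n → (∀ x ∈ l, 0 < x) → P l →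
      (f l).sum = n' ∧ (∀ x ∈ f l, 0 < x) ∧ Q (f l) ∧ g (f l) = l)
    (hgf : ∀ l, l.sum = n' → (∀ x ∈ l, 0 < x) → Q l →
      (g l).sum = n ∧ (∀ x ∈ g l, 0 < x) ∧ P (g l) ∧ f (g l) = l) :
    cc n P = cc n' Q := by
  unfold cc
  refine Finset.card_bij'
    (fun c hc => mk n' (f c.blocks)
      (hfg c.blocks c.blocks_sum (fun x hx => c.blocks_pos hx) (Finset.mem_filter.mp hc).2).1
      (hfg c.blocks c.blocks_sum (fun x hx => c.blocks_pos hx) (Finset.mem_filter.mp hc).2).2.1)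
    (fun c hc => mk n (g c.blocks)
      (hgf c.blocks c.blocks_sum (fun x hx => c.blocks_pos hx) (Finset.mem_filter.mp hc).2).1
      (hgf c.blocks c.blocks_sum (fun x hx => c.blocks_pos hx) (Finset.mem_filter.mp hc).2).2.1)
    ?_ ?_ ?_ ?_
  · intro c hc
    exact Finset.mem_filter.mpr ⟨Finset.mem_univ _,
      (hfg c.blocks c.blocks_sum (fun x hx => c.blocks_pos hx) (Finset.mem_filter.mp hc).2).2.2.1⟩
  · intro c hc
    exact Finset.mem_filter.mpr ⟨Finset.mem_univ _,
      (hgf c.blocks c.blocks_sum (fun x hx => c.blocks_pos hx) (Finset.mem_filter.mp hc).2).2.2.1⟩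
  · intro c hc
    exact Composition.ext
      (hfg c.blocks c.blocks_sum (fun x hx => c.blocks_pos hx) (Finset.mem_filter.mp hc).2).2.2.2
  · intro c hc
    exact Composition.ext
      (hgf c.blocks c.blocks_sum (fun x hx => c.blocks_pos hx) (Finset.mem_filter.mp hc).2).2.2.2



lemma head?_eq_cons {l : List ℕ} {x : ℕ} (h : l.head? = some x) : l = x :: l.tail := by
  cases l <;> simp_all

lemma getLast?_eq_head? {l : List ℕ} (h : l.reverse = l) : l.getLast? = l.head? := by
  rw [← List.head?_reverse, h]

lemma rev_sandwich (x : ℕ) (t : List ℕ) : (x :: (t ++ [x])).reverse = x :: (t.reverse ++ [x]) := by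
  simp

lemma decomp {A : ℕ} {l : List ℕ} (hrev : l.reverse = l) (hhead : l.head? = some A)
    (hlen : 3 ≤ l.length) :
    ∃ t b, l = A :: (t ++ [A]) ∧ t ≠ [] ∧ t.reverse = t ∧ t.head? = some b ∧
      t.getLast? = some b ∧ l.tail.head? = some b ∧ l.tail.dropLast = t := by
  have hl : l = A :: l.tail := head?_eq_cons hhead
  have hlast : l.getLast? = some A := by rw [getLast?_eq_head? hrev, hhead]
  have hu : l.tail ≠ [] := by
    intro h; rw [hl, h] at hlen; simp at hlen
  obtain ⟨b, t', hbt⟩ : ∃ b t', l.tail = b :: t' := by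
    cases h : l.tail with
    | nil => exact absurd h hu
    | cons b t' => exact ⟨b, t', rfl⟩
  have hlastu : l.tail.getLast? = some A := by
    rw [hl, hbt] at hlast
    rw [hbt]
    rwa [List.getLast?_cons_cons] at hlast
  set t := l.tail.dropLast with ht
  have hgl : l.tail.getLast hu = A := by
    have h5 := hlastu
    rw [List.getLast?_eq_getLast hu] at h5
    exact Option.some.inj h5
  have hsplit : l.tail = t ++ [A] := by
    conv_lhs => rw [← List.dropLast_append_getLast hu]
    rw [hgl]
  have hfull : l = A :: (t ++ [A]) := by rw [hl, hsplit]
  have htne : t ≠ [] := by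
    intro h
    rw [hfull, h] at hlen
    simp at hlen
  have htrev : t.reverse = t := by
    have h2 := hrev
    rw [hfull, rev_sandwich] at h2
    have h3 : t.reverse ++ [A] = t ++ [A] := by
      injection h2
    have := congrArg List.dropLast h3
    simpa [List.dropLast_concat] using this
  obtain ⟨c, t'', hc⟩ : ∃ c t'', t = c :: t'' := by
    cases h : t with
    | nil => exact absurd h htne
    | cons c t'' => exact ⟨c, t'', rfl⟩
  have hbc : b = c := by
    rw [hsplit, hc] at hbt
    simp at hbt
    exact hbt.1.symm
  refine ⟨t, b, hfull, htne, htrev, ?_, ?_, ?_, rfl⟩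
  · rw [hc, hbc]; rfl
  · rw [getLast?_eq_head? htrev, hc, hbc]; rfl
  · rw [hbt]; rfl

lemma sum_sandwich (x : ℕ) (t : List ℕ) : (x :: (t ++ [x])).sum = t.sum + 2 * x := by
  simp [List.sum_append]; ring

lemma len_sandwich (x : ℕ) (t : List ℕ) : (x :: (t ++ [x])).length = t.length + 2 := by
  simp

lemma mem_sandwich (x p : ℕ) (t : List ℕ) :
    p ∈ (x :: (t ++ [x])) ↔ p = x ∨ p ∈ t := by
  simp
  tauto

lemma rev_sandwich_eq {x : ℕ} {t : List ℕ} (h : t.reverse = t) :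
    (x :: (t ++ [x])).reverse = x :: (t ++ [x]) := by rw [rev_sandwich, h]


noncomputable def M1 (A : ℕ) : Fin 5 →₀ ℕ := Finsupp.single 0 A + Finsupp.single 1 1
noncomputable def M2 (A : ℕ) : Fin 5 →₀ ℕ := Finsupp.single 0 (2*A) + Finsupp.single 1 2 + Finsupp.single 3 1
noncomputable def E1 (A : ℕ) : Fin 5 →₀ ℕ := Finsupp.single 0 (2*A) + Finsupp.single 1 2 + Finsupp.single 3 2
noncomputable def E2 (A : ℕ) : Fin 5 →₀ ℕ :=
  Finsupp.single 0 (2*A) + Finsupp.single 1 2 + Finsupp.single 4 1 + Finsupp.single 2 1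

lemma M1_apply (A : ℕ) : M1 A 0 = A ∧ M1 A 1 = 1 ∧ M1 A 2 = 0 ∧ M1 A 3 = 0 ∧ M1 A 4 = 0 := by
  refine ⟨?_, ?_, ?_, ?_, ?_⟩ <;> simp [M1, Finsupp.single_apply]

lemma M2_apply (A : ℕ) : M2 A 0 = 2*A ∧ M2 A 1 = 2 ∧ M2 A 2 = 0 ∧ M2 A 3 = 1 ∧ M2 A 4 = 0 := by
  refine ⟨?_, ?_, ?_, ?_, ?_⟩ <;> simp [M2, Finsupp.single_apply]

lemma E1_apply (A : ℕ) : E1 A 0 = 2*A ∧ E1 A 1 = 2 ∧ E1 A 2 = 0 ∧ E1 A 3 = 2 ∧ E1 A 4 = 0 := by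
  refine ⟨?_, ?_, ?_, ?_, ?_⟩ <;> simp [E1, Finsupp.single_apply]

lemma E2_apply (A : ℕ) : E2 A 0 = 2*A ∧ E2 A 1 = 2 ∧ E2 A 2 = 1 ∧ E2 A 3 = 0 ∧ E2 A 4 = 1 := by
  refine ⟨?_, ?_, ?_, ?_, ?_⟩ <;> simp [E2, Finsupp.single_apply]

lemma finsupp_eq_iff (m ν : Fin 5 →₀ ℕ) :
    m = ν ↔ (m 0 = ν 0 ∧ m 1 = ν 1 ∧ m 2 = ν 2 ∧ m 3 = ν 3 ∧ m 4 = ν 4) := by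
  constructor
  · rintro rfl; exact ⟨rfl, rfl, rfl, rfl, rfl⟩
  · rintro ⟨h0, h1, h2, h3, h4⟩
    ext j
    fin_cases j <;> assumption

lemma finsupp_le_iff (m ν : Fin 5 →₀ ℕ) :
    m ≤ ν ↔ (m 0 ≤ ν 0 ∧ m 1 ≤ ν 1 ∧ m 2 ≤ ν 2 ∧ m 3 ≤ ν 3 ∧ m 4 ≤ ν 4) := by
  rw [Finsupp.le_def]
  constructor
  · intro h; exact ⟨h 0, h 1, h 2, h 3, h 4⟩
  · rintro ⟨h0, h1, h2, h3, h4⟩ j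
    fin_cases j <;> assumption

lemma sub_apply (m ν : Fin 5 →₀ ℕ) (j : Fin 5) : (m - ν) j = m j - ν j := by
  rw [Finsupp.coe_tsub]; rfl

section Main

variable {k : ℕ} (a : Fin k → ℕ) (A : ℕ)

lemma L0 (m : Fin 5 →₀ ℕ) (hm1 : m 1 = 0) : cS a A m = 0 := by
  apply cc_zero
  rintro l _ _ ⟨_, _, hhead, hlen, _⟩
  rw [hm1] at hlen
  rw [List.length_eq_zero_iff.mp hlen] at hhead
  simp at hhead

lemma L0' (m : Fin 5 →₀ ℕ) (hm1 : m 1 = 0) : cT' a A m = 0 := by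
  apply cc_zero
  rintro l _ _ ⟨⟨_, _, hlen, _⟩, hne, _⟩
  rw [hm1] at hlen
  rw [List.length_eq_zero_iff.mp hlen] at hne
  simp at hne

lemma L1 (hA : 0 < A) (hmem : ∃ j, a j = A) (m : Fin 5 →₀ ℕ) (hm1 : m 1 = 1) :
    cS a A m = if m = M1 A then 1 else 0 := by
  obtain ⟨v0, v1, v2, v3, v4⟩ := M1_apply A
  by_cases hm : m = M1 A
  · subst hm
    rw [if_pos rfl]
    apply cc_one [A]
    · simp [v0]
    · intro x hx; simp at hx; omega
    · exact ⟨fun p hp => by simp at hp; exact hp ▸ hmem, by simp, by simp,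
        by simp [v1], by simp [risesL_single, v2], by simp [levelsL_single, v3],
        by simp [dropsL_single, v4]⟩
    · rintro l _ _ ⟨_, _, hhead, hlen, _⟩
      rw [v1] at hlen
      obtain ⟨x, hx⟩ := List.length_eq_one_iff.mp hlen
      rw [hx] at hhead ⊢
      simp at hhead
      rw [hhead]
  · rw [if_neg hm]
    apply cc_zero
    rintro l hsum _ ⟨_, _, hhead, hlen, hr, hl2, hd⟩
    rw [hm1] at hlen
    obtain ⟨x, hx⟩ := List.length_eq_one_iff.mp hlen
    subst hx
    simp at hhead
    subst hhead
    apply hm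
    rw [finsupp_eq_iff]
    simp at hsum
    refine ⟨by omega, by omega, ?_, ?_, ?_⟩ <;>
      simp [← hr, ← hl2, ← hd, risesL_single, levelsL_single, dropsL_single, v2, v3, v4]

lemma L2 (hA : 0 < A) (hmem : ∃ j, a j = A) (m : Fin 5 →₀ ℕ) (hm1 : m 1 = 2) :
    cS a A m = if m = M2 A then 1 else 0 := by
  obtain ⟨v0, v1, v2, v3, v4⟩ := M2_apply A
  by_cases hm : m = M2 A
  · subst hm
    rw [if_pos rfl]
    apply cc_one [A, A]
    · simp [v0]; ring
    · intro x hx; simp at hx; omega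
    · exact ⟨fun p hp => by simp at hp; exact hp ▸ hmem, by simp, by simp,
        by simp [v1], by simp [risesL_pair, v2], by simp [levelsL_pair, v3],
        by simp [dropsL_pair, v4]⟩
    · rintro l _ _ ⟨_, hrev, hhead, hlen, _⟩
      rw [v1] at hlen
      obtain ⟨x, y, hx⟩ := List.length_eq_two.mp hlen
      subst hx
      simp at hhead hrev
      rw [hrev.1, hhead]
  · rw [if_neg hm]
    apply cc_zero
    rintro l hsum _ ⟨_, hrev, hhead, hlen, hr, hl2, hd⟩
    rw [hm1] at hlen
    obtain ⟨x, y, hx⟩ := List.length_eq_two.mp hlen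
    subst hx
    simp at hhead hrev
    subst hhead
    rw [hrev.1] at hsum hr hl2 hd
    apply hm
    rw [finsupp_eq_iff]
    simp at hsum
    refine ⟨by omega, by omega, ?_, ?_, ?_⟩ <;>
      simp [← hr, ← hl2, ← hd, risesL_pair, levelsL_pair, dropsL_pair, v2, v3, v4]


lemma risesL_sandwich_same (x : ℕ) (t : List ℕ) (h1 : t.head? = some x)
    (h2 : t.getLast? = some x) : risesL (x :: (t ++ [x])) = risesL t := by
  rw [risesL_sandwich x x t h1 h2, if_neg (lt_irrefl x)]
  omega

lemma levelsL_sandwich_same (x : ℕ) (t : List ℕ) (h1 : t.head? = some x)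
    (h2 : t.getLast? = some x) : levelsL (x :: (t ++ [x])) = levelsL t + 2 := by
  rw [levelsL_sandwich x x t h1 h2, if_pos rfl]

lemma dropsL_sandwich_same (x : ℕ) (t : List ℕ) (h1 : t.head? = some x)
    (h2 : t.getLast? = some x) : dropsL (x :: (t ++ [x])) = dropsL t := by
  rw [dropsL_sandwich x x t h1 h2, if_neg (lt_irrefl x)]
  omega

lemma head?_append_ne {t : List ℕ} (h : t ≠ []) (x : ℕ) : (t ++ [x]).head? = t.head? := by
  cases t <;> simp_all

lemma if_ne_sum {A b : ℕ} (h : b ≠ A) :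
    ((if A < b then 1 else 0) + (if b < A then 1 else 0)) = 1 := by
  rcases Nat.lt_trichotomy A b with h1|h1|h1
  · simp [h1, Nat.lt_asymm h1]
  · exact absurd h1.symm h
  · simp [h1, Nat.lt_asymm h1]

lemma L4 (hA : 0 < A) (m : Fin 5 →₀ ℕ) :
    cT a m = (if m = 0 then 1 else 0) + cS a A m + cT' a A m := by
  rw [cT, cc_split (n := m 0) (Pt a m) (fun l => l.head? = none),
    cc_split (n := m 0) (fun l => Pt a m l ∧ ¬ l.head? = none) (fun l => l.head? = some A)]
  have h1 : cc (m 0) (fun l => Pt a m l ∧ l.head? = none) = (if m = 0 then 1 else 0) := by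
    by_cases h : m = 0
    · subst h
      rw [if_pos rfl]
      apply cc_one []
      · simp
      · simp
      · exact ⟨⟨by simp, by simp, by simp, by simp [risesL], by simp [levelsL], by simp [dropsL]⟩,
          rfl⟩
      · rintro l _ _ ⟨_, hnone⟩
        exact List.head?_eq_none_iff.mp hnone
    · rw [if_neg h]
      apply cc_zero
      rintro l hsum _ ⟨⟨_, _, hlen, hr, hl2, hd⟩, hnone⟩
      have : l = [] := List.head?_eq_none_iff.mp hnone
      subst this
      apply h
      rw [finsupp_eq_iff]
      simp at hsum hlen hr hl2 hd ⊢
      refine ⟨hsum.symm, hlen.symm, ?_, ?_, ?_⟩ <;> simp [← hr, ← hl2, ← hd, risesL, levelsL, dropsL]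
  have h2 : cc (m 0) (fun l => (Pt a m l ∧ ¬ l.head? = none) ∧ l.head? = some A)
      = cS a A m := by
    rw [cS]
    apply cc_congr
    intro l _ _
    unfold Pt Ps
    constructor
    · rintro ⟨⟨⟨q1, q2, q3, q4, q5, q6⟩, _⟩, hh⟩
      exact ⟨q1, q2, hh, q3, q4, q5, q6⟩
    · rintro ⟨q1, q2, hh, q3, q4, q5, q6⟩
      exact ⟨⟨⟨q1, q2, q3, q4, q5, q6⟩, by simp [hh]⟩, hh⟩
  have h3 : cc (m 0) (fun l => (Pt a m l ∧ ¬ l.head? = none) ∧ ¬ l.head? = some A)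
      = cT' a A m := by
    rw [cT']
    apply cc_congr
    intro l _ _
    unfold Pt'
    tauto
  rw [h1, h2, h3]
  ring

lemma L3 (hA : 0 < A) (hmem : ∃ j, a j = A) (m : Fin 5 →₀ ℕ) (hm1 : 3 ≤ m 1) :
    cS a A m = (if E1 A ≤ m then cS a A (m - E1 A) else 0)
      + (if E2 A ≤ m then cT' a A (m - E2 A) else 0) := by
  obtain ⟨e0, e1, e2, e3, e4⟩ := E1_apply A
  obtain ⟨f0, f1, f2, f3, f4⟩ := E2_apply A
  rw [cS, cc_split (n := m 0) (Ps a A m) (fun l => l.tail.head? = some A)]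
  have claim1 : cc (m 0) (fun l => Ps a A m l ∧ l.tail.head? = some A)
      = (if E1 A ≤ m then cS a A (m - E1 A) else 0) := by
    by_cases hE : E1 A ≤ m
    · rw [if_pos hE, cS]
      have hEc := (finsupp_le_iff _ _).mp hE
      apply cc_bij (f := fun l => l.tail.dropLast) (g := fun l => A :: (l ++ [A]))
      · rintro l hsum hposl ⟨⟨hmem', hrev, hhead, hlen, hr, hl2, hd⟩, hC⟩
        obtain ⟨t, b, hfull, htne, htrev, hth, htl, hbb, hdl⟩ := decomp hrev hhead (by omega)
        have hbA : b = A := by rw [hC] at hbb; exact (Option.some.inj hbb).symm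
        rw [hbA] at hth htl
        rw [hfull, sum_sandwich] at hsum
        rw [hfull, len_sandwich] at hlen
        rw [hfull, risesL_sandwich_same A t hth htl] at hr
        rw [hfull, levelsL_sandwich_same A t hth htl] at hl2
        rw [hfull, dropsL_sandwich_same A t hth htl] at hd
        simp only [hdl]
        refine ⟨?_, ?_, ⟨?_, htrev, hth, ?_, ?_, ?_, ?_⟩, ?_⟩
        · rw [sub_apply, e0]; omega
        · intro x hx
          exact hposl x (by rw [hfull, mem_sandwich]; right; exact hx)
        · intro p hp
          exact hmem' p (by rw [hfull, mem_sandwich]; right; exact hp)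
        · rw [sub_apply, e1]; omega
        · rw [sub_apply, e2]; omega
        · rw [sub_apply, e3]; omega
        · rw [sub_apply, e4]; omega
        · exact hfull.symm
      · rintro t hsum hposl ⟨hmem', htrev, hth, hlen, hr, hl2, hd⟩
        have htne : t ≠ [] := by intro h; subst h; simp at hth
        have htl : t.getLast? = some A := by rw [getLast?_eq_head? htrev, hth]
        rw [sub_apply, e0] at hsum
        rw [sub_apply, e1] at hlen
        rw [sub_apply, e2] at hr
        rw [sub_apply, e3] at hl2
        rw [sub_apply, e4] at hd
        refine ⟨?_, ?_, ⟨⟨?_, ?_, ?_, ?_, ?_, ?_, ?_⟩, ?_⟩, ?_⟩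
        · rw [sum_sandwich]; omega
        · intro x hx
          rw [mem_sandwich] at hx
          rcases hx with rfl | hx
          · exact hA
          · exact hposl x hx
        · intro p hp
          rw [mem_sandwich] at hp
          rcases hp with rfl | hp
          · exact hmem
          · exact hmem' p hp
        · exact rev_sandwich_eq htrev
        · rfl
        · rw [len_sandwich]; omega
        · rw [risesL_sandwich_same A t hth htl]; omega
        · rw [levelsL_sandwich_same A t hth htl]; omega
        · rw [dropsL_sandwich_same A t hth htl]; omega
        · show (t ++ [A]).head? = some A
          rw [head?_append_ne htne, hth]
        · show (t ++ [A]).dropLast = t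
          exact List.dropLast_concat
    · rw [if_neg hE]
      apply cc_zero
      rintro l hsum hposl ⟨⟨hmem', hrev, hhead, hlen, hr, hl2, hd⟩, hC⟩
      obtain ⟨t, b, hfull, htne, htrev, hth, htl, hbb, hdl⟩ := decomp hrev hhead (by omega)
      have hbA : b = A := by rw [hC] at hbb; exact (Option.some.inj hbb).symm
      rw [hbA] at hth htl
      rw [hfull, sum_sandwich] at hsum
      rw [hfull, levelsL_sandwich_same A t hth htl] at hl2
      apply hE
      rw [finsupp_le_iff]
      refine ⟨?_, ?_, ?_, ?_, ?_⟩ <;> simp [e0, e1, e2, e3, e4] <;> omega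
  have claim2 : cc (m 0) (fun l => Ps a A m l ∧ ¬ l.tail.head? = some A)
      = (if E2 A ≤ m then cT' a A (m - E2 A) else 0) := by
    by_cases hE : E2 A ≤ m
    · rw [if_pos hE, cT']
      have hEc := (finsupp_le_iff _ _).mp hE
      apply cc_bij (f := fun l => l.tail.dropLast) (g := fun l => A :: (l ++ [A]))
      · rintro l hsum hposl ⟨⟨hmem', hrev, hhead, hlen, hr, hl2, hd⟩, hC⟩
        obtain ⟨t, b, hfull, htne, htrev, hth, htl, hbb, hdl⟩ := decomp hrev hhead (by omega)
        have hbA : b ≠ A := by intro h; subst h; exact hC hbb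
        rw [hfull, sum_sandwich] at hsum
        rw [hfull, len_sandwich] at hlen
        rw [hfull, risesL_sandwich A b t hth htl, if_ne_sum hbA] at hr
        rw [hfull, levelsL_sandwich A b t hth htl, if_neg (fun h => hbA h.symm)] at hl2
        rw [hfull, dropsL_sandwich A b t hth htl] at hd
        rw [add_comm (if b < A then 1 else 0) (if A < b then 1 else 0), if_ne_sum hbA] at hd
        simp only [hdl]
        refine ⟨?_, ?_, ⟨⟨?_, htrev, ?_, ?_, ?_, ?_⟩, ?_, ?_⟩, ?_⟩
        · rw [sub_apply, f0]; omega
        · intro x hx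
          exact hposl x (by rw [hfull, mem_sandwich]; right; exact hx)
        · intro p hp
          exact hmem' p (by rw [hfull, mem_sandwich]; right; exact hp)
        · rw [sub_apply, f1]; omega
        · rw [sub_apply, f2]; omega
        · rw [sub_apply, f3]; omega
        · rw [sub_apply, f4]; omega
        · rw [hth]; simp
        · rw [hth]; simp [hbA]
        · exact hfull.symm
      · rintro t hsum hposl ⟨⟨hmem', htrev, hlen, hr, hl2, hd⟩, hne, hneA⟩
        have htne : t ≠ [] := by
          intro h; subst h; exact hne rfl
        obtain ⟨b, t'', hbt⟩ : ∃ b t'', t = b :: t'' := by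
          cases h : t with
          | nil => exact absurd h htne
          | cons b t'' => exact ⟨b, t'', rfl⟩
        have hth : t.head? = some b := by rw [hbt]; rfl
        have hbA : b ≠ A := by intro h; subst h; exact hneA hth
        have htl : t.getLast? = some b := by rw [getLast?_eq_head? htrev, hth]
        rw [sub_apply, f0] at hsum
        rw [sub_apply, f1] at hlen
        rw [sub_apply, f2] at hr
        rw [sub_apply, f3] at hl2
        rw [sub_apply, f4] at hd
        refine ⟨?_, ?_, ⟨⟨?_, ?_, ?_, ?_, ?_, ?_, ?_⟩, ?_⟩, ?_⟩
        · rw [sum_sandwich]; omega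
        · intro x hx
          rw [mem_sandwich] at hx
          rcases hx with rfl | hx
          · exact hA
          · exact hposl x hx
        · intro p hp
          rw [mem_sandwich] at hp
          rcases hp with rfl | hp
          · exact hmem
          · exact hmem' p hp
        · exact rev_sandwich_eq htrev
        · rfl
        · rw [len_sandwich]; omega
        · rw [risesL_sandwich A b t hth htl, if_ne_sum hbA]; omega
        · rw [levelsL_sandwich A b t hth htl, if_neg (fun h => hbA h.symm)]; omega
        · rw [dropsL_sandwich A b t hth htl,
            add_comm (if b < A then 1 else 0) (if A < b then 1 else 0), if_ne_sum hbA]; omega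
        · show ¬ (t ++ [A]).head? = some A
          rw [head?_append_ne htne, hth]
          simp [hbA]
        · show (t ++ [A]).dropLast = t
          exact List.dropLast_concat
    · rw [if_neg hE]
      apply cc_zero
      rintro l hsum hposl ⟨⟨hmem', hrev, hhead, hlen, hr, hl2, hd⟩, hC⟩
      obtain ⟨t, b, hfull, htne, htrev, hth, htl, hbb, hdl⟩ := decomp hrev hhead (by omega)
      have hbA : b ≠ A := by intro h; subst h; exact hC hbb
      rw [hfull, sum_sandwich] at hsum
      rw [hfull, risesL_sandwich A b t hth htl, if_ne_sum hbA] at hr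
      rw [hfull, dropsL_sandwich A b t hth htl] at hd
      rw [add_comm (if b < A then 1 else 0) (if A < b then 1 else 0), if_ne_sum hbA] at hd
      apply hE
      rw [finsupp_le_iff]
      refine ⟨?_, ?_, ?_, ?_, ?_⟩ <;> simp [f0, f1, f2, f3, f4] <;> omega
  rw [claim1, claim2]


lemma star (hA : 0 < A) (hmem : ∃ j, a j = A) (m : Fin 5 →₀ ℕ) :
    cS a A m + (if E2 A ≤ m then cS a A (m - E2 A) else 0) + (if m = E2 A then 1 else 0)
    = (if m = M1 A then 1 else 0) + (if m = M2 A then 1 else 0)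
      + (if E1 A ≤ m then cS a A (m - E1 A) else 0)
      + (if E2 A ≤ m then cT a (m - E2 A) else 0) := by
  obtain ⟨m10, m11, m12, m13, m14⟩ := M1_apply A
  obtain ⟨m20, m21, m22, m23, m24⟩ := M2_apply A
  obtain ⟨e10, e11, e12, e13, e14⟩ := E1_apply A
  obtain ⟨e20, e21, e22, e23, e24⟩ := E2_apply A
  have hs1 : (m - E1 A) 1 = m 1 - 2 := by rw [sub_apply, e11]
  have hs2 : (m - E2 A) 1 = m 1 - 2 := by rw [sub_apply, e21]
  have hmE2 : E2 A ≤ m → ((m - E2 A = 0) ↔ m = E2 A) := by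
    intro h
    constructor
    · intro h0
      exact le_antisymm (tsub_eq_zero_iff_le.mp h0) h
    · intro h0; rw [h0]; exact tsub_self _
  rcases Nat.lt_or_ge (m 1) 3 with h3 | h3
  · have hE2cS : (if E2 A ≤ m then cS a A (m - E2 A) else 0) = 0 := by
      split_ifs with h
      · exact L0 a A _ (by rw [hs2]; omega)
      · rfl
    have hE1cS : (if E1 A ≤ m then cS a A (m - E1 A) else 0) = 0 := by
      split_ifs with h
      · have := (finsupp_le_iff _ _).mp h
        exact L0 a A _ (by rw [hs1]; omega)
      · rfl
    have hE2cT : (if E2 A ≤ m then cT a (m - E2 A) else 0) = (if m = E2 A then 1 else 0) := by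
      by_cases h : E2 A ≤ m
      · rw [if_pos h, L4 a A hA, L0 a A _ (by rw [hs2]; omega), L0' a A _ (by rw [hs2]; omega)]
        by_cases h0 : m = E2 A
        · rw [if_pos h0, if_pos ((hmE2 h).mpr h0)]
        · rw [if_neg h0, if_neg (fun hh => h0 ((hmE2 h).mp hh))]
      · rw [if_neg h, if_neg (fun h0 => h (le_of_eq h0.symm))]
    rw [hE2cS, hE1cS, hE2cT]
    rcases (by omega : m 1 = 0 ∨ m 1 = 1 ∨ m 1 = 2) with h | h | h
    · rw [L0 a A m h,
        if_neg (show ¬ m = M1 A from fun hh => by subst hh; rw [m11] at h; omega),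
        if_neg (show ¬ m = M2 A from fun hh => by subst hh; rw [m21] at h; omega),
        if_neg (show ¬ m = E2 A from fun hh => by subst hh; rw [e21] at h; omega)]
    · rw [L1 a A hA hmem m h,
        if_neg (show ¬ m = M2 A from fun hh => by subst hh; rw [m21] at h; omega),
        if_neg (show ¬ m = E2 A from fun hh => by subst hh; rw [e21] at h; omega)]
      try ring
    · rw [L2 a A hA hmem m h,
        if_neg (show ¬ m = M1 A from fun hh => by subst hh; rw [m11] at h; omega)]
      try ring
  · have hM1 : ¬ m = M1 A := fun hh => by subst hh; rw [m11] at h3; omega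
    have hM2 : ¬ m = M2 A := fun hh => by subst hh; rw [m21] at h3; omega
    have hE2' : ¬ m = E2 A := fun hh => by subst hh; rw [e21] at h3; omega
    rw [L3 a A hA hmem m h3, if_neg hM1, if_neg hM2, if_neg hE2']
    have hT : (if E2 A ≤ m then cT a (m - E2 A) else 0)
        = (if E2 A ≤ m then cS a A (m - E2 A) else 0)
          + (if E2 A ≤ m then cT' a A (m - E2 A) else 0) := by
      by_cases h : E2 A ≤ m
      · simp only [if_pos h]
        rw [L4 a A hA, if_neg (fun hh => by rw [hh] at hs2; simp at hs2; omega)]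
        omega
      · simp only [if_neg h]
    rw [hT]
    ring

end Main
end Stmt3Aux

theorem stmt3 {k : ℕ} (hk : 1 ≤ k) (a : Fin k → ℕ) (hpos : ∀ i, 0 < a i)
    (hmono : StrictMono a) (i : Fin k) :
    (1 - (MvPowerSeries.X 0) ^ (2 * a i) * (MvPowerSeries.X 1) ^ 2
        * ((MvPowerSeries.X 3) ^ 2 - MvPowerSeries.X 4 * MvPowerSeries.X 2))
      * PAs a (a i)
    = (MvPowerSeries.X 0) ^ (a i) * MvPowerSeries.X 1
      + (MvPowerSeries.X 0) ^ (2 * a i) * (MvPowerSeries.X 1) ^ 2 * MvPowerSeries.X 3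
      + (MvPowerSeries.X 0) ^ (2 * a i) * (MvPowerSeries.X 1) ^ 2
          * MvPowerSeries.X 4 * MvPowerSeries.X 2 * (PA a - 1) := by
  have hA : 0 < a i := hpos i
  have hmem : ∃ j, a j = a i := ⟨i, rfl⟩
  have hX : ∀ s : Fin 5, (MvPowerSeries.X s : MvPowerSeries (Fin 5) ℤ)
      = MvPowerSeries.monomial (R := ℤ) (Finsupp.single s 1) 1 := fun s => by
    rw [← pow_one (MvPowerSeries.X s : MvPowerSeries (Fin 5) ℤ), MvPowerSeries.X_pow_eq]
  have h1 : (MvPowerSeries.X 0 : MvPowerSeries (Fin 5) ℤ) ^ (a i) * MvPowerSeries.X 1 = MvPowerSeries.monomial (R := ℤ) (Stmt3Aux.M1 (a i)) 1 := by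
    rw [MvPowerSeries.X_pow_eq, hX 1, MvPowerSeries.monomial_mul_monomial, one_mul]
    rfl
  have h2 : (MvPowerSeries.X 0 : MvPowerSeries (Fin 5) ℤ) ^ (2 * a i) * MvPowerSeries.X 1 ^ 2 * MvPowerSeries.X 3
      = MvPowerSeries.monomial (R := ℤ) (Stmt3Aux.M2 (a i)) 1 := by
    rw [MvPowerSeries.X_pow_eq, MvPowerSeries.X_pow_eq, hX 3, MvPowerSeries.monomial_mul_monomial, MvPowerSeries.monomial_mul_monomial, one_mul, one_mul]
    rfl
  have h3 : (MvPowerSeries.X 0 : MvPowerSeries (Fin 5) ℤ) ^ (2 * a i) * MvPowerSeries.X 1 ^ 2 * MvPowerSeries.X 3 ^ 2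
      = MvPowerSeries.monomial (R := ℤ) (Stmt3Aux.E1 (a i)) 1 := by
    rw [MvPowerSeries.X_pow_eq, MvPowerSeries.X_pow_eq, MvPowerSeries.X_pow_eq (R := ℤ) (3 : Fin 5) 2, MvPowerSeries.monomial_mul_monomial,
      MvPowerSeries.monomial_mul_monomial, one_mul, one_mul]
    rfl
  have h4 : (MvPowerSeries.X 0 : MvPowerSeries (Fin 5) ℤ) ^ (2 * a i) * MvPowerSeries.X 1 ^ 2 * MvPowerSeries.X 4 * MvPowerSeries.X 2
      = MvPowerSeries.monomial (R := ℤ) (Stmt3Aux.E2 (a i)) 1 := by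
    rw [MvPowerSeries.X_pow_eq, MvPowerSeries.X_pow_eq, hX 4, hX 2, MvPowerSeries.monomial_mul_monomial, MvPowerSeries.monomial_mul_monomial,
      MvPowerSeries.monomial_mul_monomial, one_mul, one_mul, one_mul]
    rfl
  have h5 : (MvPowerSeries.X 0 : MvPowerSeries (Fin 5) ℤ) ^ (2 * a i) * MvPowerSeries.X 1 ^ 2 * (MvPowerSeries.X 4 * MvPowerSeries.X 2)
      = MvPowerSeries.monomial (R := ℤ) (Stmt3Aux.E2 (a i)) 1 := by rw [← mul_assoc]; exact h4
  have hfac : (MvPowerSeries.X 0 : MvPowerSeries (Fin 5) ℤ) ^ (2 * a i) * MvPowerSeries.X 1 ^ 2 * (MvPowerSeries.X 3 ^ 2 - MvPowerSeries.X 4 * MvPowerSeries.X 2)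
      = MvPowerSeries.monomial (R := ℤ) (Stmt3Aux.E1 (a i)) 1 - MvPowerSeries.monomial (R := ℤ) (Stmt3Aux.E2 (a i)) 1 := by
    rw [mul_sub, h3, h5]
  rw [hfac, h1, h2, h4]
  have main : PAs a (a i) + MvPowerSeries.monomial (R := ℤ) (Stmt3Aux.E2 (a i)) 1 * PAs a (a i) + MvPowerSeries.monomial (R := ℤ) (Stmt3Aux.E2 (a i)) 1
      = MvPowerSeries.monomial (R := ℤ) (Stmt3Aux.M1 (a i)) 1 + MvPowerSeries.monomial (R := ℤ) (Stmt3Aux.M2 (a i)) 1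
        + MvPowerSeries.monomial (R := ℤ) (Stmt3Aux.E1 (a i)) 1 * PAs a (a i) + MvPowerSeries.monomial (R := ℤ) (Stmt3Aux.E2 (a i)) 1 * PA a := by
    apply MvPowerSeries.ext
    intro m
    rw [map_add, map_add, map_add, map_add, map_add, MvPowerSeries.coeff_monomial_mul, MvPowerSeries.coeff_monomial_mul,
      MvPowerSeries.coeff_monomial_mul, MvPowerSeries.coeff_monomial, MvPowerSeries.coeff_monomial, MvPowerSeries.coeff_monomial,
      Stmt3Aux.coeff_PAs, Stmt3Aux.coeff_PAs, Stmt3Aux.coeff_PAs, Stmt3Aux.coeff_PA]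
    have hstar := Stmt3Aux.star a (a i) hA hmem m
    simp only [one_mul]
    split_ifs at hstar ⊢ <;> omega
  linear_combination main
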